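/- Let q(x) = ½xᵀQx + cᵀx + α with Q ∈ ℝⁿˣⁿ symmetric, and let P = {x ∈ ℝⁿ : Ax ≥ b} be a polyhedron. For x̄ ∈ P the following are equivalent: (i) x̄ is a local minimizer of q on P; (ii) x̄ is a stationary point of q on P and vᵀQv ≥ 0 for every v ∈ T(x̄;P) with ∇q(x̄)ᵀv = 0 (i.e., Q is copositive on the critical cone C(x̄;q;P)). -/

import Mathlib

open Filter Topology Set

noncomputable section

/-- Euclidean norm on `Fin n → ℝ`. -/
def n2 {n : ℕ} (v : Fin n → ℝ) : ℝ := Real.sqrt (∑ i, v i ^ 2)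

/-- The tangent cone of `S` at `x`: `v ∈ T(x;S)` iff there are `xᵏ ∈ S → x` and `τ_k ↓ 0`
with `(xᵏ − x)/τ_k → v`. -/
def TangentCone {n : ℕ} (S : Set (Fin n → ℝ)) (x : Fin n → ℝ) : Set (Fin n → ℝ) :=
  {v | ∃ (xs : ℕ → Fin n → ℝ) (τ : ℕ → ℝ),
    (∀ k, xs k ∈ S) ∧ Tendsto xs atTop (𝓝 x) ∧
    (∀ k, 0 < τ k) ∧ Tendsto τ atTop (𝓝 (0:ℝ)) ∧
    Tendsto (fun k => (τ k)⁻¹ • (xs k - x)) atTop (𝓝 v)}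

/-- `xbar ∈ X` is a local minimizer of `f` on `X`. -/
def IsLocMin' {n : ℕ} (f : (Fin n → ℝ) → ℝ) (X : Set (Fin n → ℝ)) (xbar : Fin n → ℝ) : Prop :=
  xbar ∈ X ∧ ∃ ε > (0:ℝ), ∀ y ∈ X, n2 (y - xbar) < ε → f xbar ≤ f y

/-- The quadratic function `q(x) = ½ xᵀQx + cᵀx + α`. -/
def quadF {n : ℕ} (Q : Matrix (Fin n) (Fin n) ℝ) (c : Fin n → ℝ) (α : ℝ)
    (x : Fin n → ℝ) : ℝ :=
  (1/2) * (∑ i, ∑ j, Q i j * x i * x j) + (∑ i, c i * x i) + α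

/-- The gradient `∇q(x) = Qx + c` of the quadratic `q` (for symmetric `Q`). -/
def gradQ {n : ℕ} (Q : Matrix (Fin n) (Fin n) ℝ) (c : Fin n → ℝ) (x : Fin n → ℝ) :
    Fin n → ℝ :=
  fun i => (∑ j, Q i j * x j) + c i

/-!
Necessity: along a ray `xbar + t • d` into the polyhedron, `q` is the one-variable quadratic
`q xbar + t ∇q(xbar)ᵀd + (t²/2) dᵀQd`, which stays above `q xbar` for small `t > 0` only if the
linear coefficient is nonnegative and, when it vanishes, so is the quadratic one.

Sufficiency: the tangent cone of a polyhedron is the cone `K` of directions keeping the active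
constraints, and `K` is finitely generated (Minkowski–Weyl, via Fourier–Motzkin elimination).
Sorting its generators by whether `∇q(xbar)` annihilates them writes every `d ∈ K` as `z + r`
with `z` in the critical cone and `‖r‖ ≤ κ ∇q(xbar)ᵀd`. Copositivity on the critical cone then
gives `dᵀQd ≥ -γ (∇q(xbar)ᵀd) ‖d‖`, so near `xbar` the first-order term dominates.
-/

namespace PointedCone

variable {𝕜 E : Type*} [Field 𝕜] [LinearOrder 𝕜] [IsStrictOrderedRing 𝕜]
  [AddCommGroup E] [Module 𝕜 E]

def fourierMotzkin (a : Module.Dual 𝕜 E) (S : Set E) : Set E :=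
  {s ∈ S | 0 ≤ a s} ∪ image2 (fun s t => a s • t - a t • s) {s ∈ S | 0 ≤ a s} {t ∈ S | a t < 0}

lemma smul_sub_smul_mem_hull_image2 {a : Module.Dual 𝕜 E} {S T : Set E} {p n : E}
    (hp : p ∈ hull 𝕜 S) (hn : n ∈ hull 𝕜 T) :
    a p • n - a n • p ∈ hull 𝕜 (image2 (fun s t => a s • t - a t • s) S T) := by
  induction hn using Submodule.span_induction with
  | mem t ht =>
    induction hp using Submodule.span_induction with
    | mem s hs => exact subset_hull (mem_image2_of_mem hs ht)
    | zero => simp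
    | add p q _ _ hp hq =>
      convert add_mem hp hq using 1
      simp only [map_add, add_smul, smul_add]; abel
    | smul c p _ hp =>
      convert Submodule.smul_mem _ c hp using 1
      simp only [map_smul, ← Nonneg.coe_smul, smul_sub, smul_smul, smul_eq_mul, mul_comm]
  | zero => simp
  | add n m _ _ hn hm =>
    convert add_mem hn hm using 1
    simp only [map_add, add_smul, smul_add]; abel
  | smul c n _ hn =>
    convert Submodule.smul_mem _ c hn using 1
    simp only [map_smul, ← Nonneg.coe_smul, smul_sub, smul_smul, smul_eq_mul, mul_comm]

lemma eq_zero_of_mem_hull_of_nonneg {a : Module.Dual 𝕜 E} {T : Set E}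
    (hT : ∀ t ∈ T, a t < 0) {n : E} (hn : n ∈ hull 𝕜 T) (han : 0 ≤ a n) : n = 0 := by
  have hnonpos : ∀ n ∈ hull 𝕜 T, a n ≤ 0 ∧ (a n = 0 → n = 0) := by
    intro n hn
    induction hn using Submodule.span_induction with
    | mem t ht => exact ⟨(hT t ht).le, fun h => absurd h (hT t ht).ne⟩
    | zero => simp
    | add x y _ _ hx hy =>
      refine ⟨by rw [map_add]; linarith [hx.1, hy.1], fun h => ?_⟩
      rw [map_add] at h
      rw [hx.2 (by linarith [hx.1, hy.1]), hy.2 (by linarith [hx.1, hy.1]), add_zero]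
    | smul c x _ hx =>
      rw [← Nonneg.coe_smul, map_smul, smul_eq_mul]
      refine ⟨mul_nonpos_of_nonneg_of_nonpos c.2 hx.1, fun h => ?_⟩
      rcases mul_eq_zero.1 h with hc | hx0
      · rw [hc, zero_smul]
      · rw [hx.2 hx0, smul_zero]
  exact (hnonpos n hn).2 (le_antisymm (hnonpos n hn).1 han)

theorem hull_fourierMotzkin (a : Module.Dual 𝕜 E) (S : Set E) :
    hull 𝕜 (fourierMotzkin a S) = hull 𝕜 S ⊓ dual .id {a} := by
  apply le_antisymm
  · refine Submodule.span_le.2 ?_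
    rintro x (⟨hxS, hax⟩ | ⟨s, ⟨hsS, has⟩, t, ⟨htS, hat⟩, rfl⟩)
    · exact ⟨subset_hull hxS, by simpa using hax⟩
    · refine ⟨?_, by simp [mul_comm]⟩
      change a s • t - a t • s ∈ hull 𝕜 S
      rw [sub_eq_add_neg, ← neg_smul]
      exact add_mem (smul_mem _ has (subset_hull htS))
        (smul_mem _ (neg_nonneg.2 hat.le) (subset_hull hsS))
  · rintro x ⟨hxS, hax⟩
    replace hax : 0 ≤ a x := by simpa using hax
    have hS : S = {s ∈ S | 0 ≤ a s} ∪ {t ∈ S | a t < 0} := by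
      ext s; by_cases h : 0 ≤ a s <;> simp [h, not_le.1]
    rw [SetLike.mem_coe, hS, hull, Submodule.span_union, Submodule.mem_sup] at hxS
    obtain ⟨p, hp, n, hn, rfl⟩ := hxS
    have hpos : hull 𝕜 {s ∈ S | 0 ≤ a s} ≤ hull 𝕜 (fourierMotzkin a S) :=
      Submodule.span_mono subset_union_left
    have hap : 0 ≤ a p := by
      have hle : hull 𝕜 {s ∈ S | 0 ≤ a s} ≤ dual .id {a} :=
        Submodule.span_le.2 fun s hs => by simpa using hs.2
      simpa using hle hp
    rw [map_add] at hax
    rcases hap.eq_or_lt with hap | hap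
    · rw [eq_zero_of_mem_hull_of_nonneg (fun t ht => ht.2) hn (by linarith), add_zero]
      exact hpos hp
    · have hcomb := smul_sub_smul_mem_hull_image2 (a := a) hp hn
      have key : p + n = (1 + a n / a p) • p + (a p)⁻¹ • (a p • n - a n • p) := by
        rw [smul_sub, smul_smul, smul_smul, inv_mul_cancel₀ hap.ne', one_smul, add_smul,
          one_smul, div_eq_inv_mul]
        abel
      rw [key]
      refine add_mem (smul_mem _ ?_ (hpos hp)) (smul_mem _ (inv_nonneg.2 hap.le)
        (Submodule.span_mono subset_union_right hcomb))
      rw [← div_self hap.ne', ← add_div]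
      exact div_nonneg hax hap.le

theorem fg_top [Module.Finite 𝕜 E] : (⊤ : PointedCone 𝕜 E).FG := by
  let b := Module.finBasis 𝕜 E
  refine Submodule.fg_def.2 ⟨range b ∪ range (fun i => -b i),
    (finite_range _).union (finite_range _), eq_top_iff.2 fun x _ => ?_⟩
  rw [← b.sum_repr x]
  refine sum_mem fun i _ => ?_
  rcases le_or_gt 0 (b.repr x i) with h | h
  · exact smul_mem _ h (subset_hull (mem_union_left _ (mem_range_self i)))
  · rw [← neg_smul_neg]
    exact smul_mem _ (neg_nonneg.2 h.le) (subset_hull (mem_union_right _ (mem_range_self i)))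

theorem fg_dual_of_finite [Module.Finite 𝕜 E] {s : Set (Module.Dual 𝕜 E)} (hs : s.Finite) :
    (dual .id s).FG := by
  induction s, hs using Set.Finite.induction_on with
  | empty => simpa using fg_top
  | @insert a s _ _ ih =>
    obtain ⟨S, hS, hSs⟩ := Submodule.fg_def.1 ih
    refine Submodule.fg_def.2 ⟨fourierMotzkin a S, ?_, ?_⟩
    · exact (hS.sep _).union ((hS.sep _).image2 _ (hS.sep _))
    · change hull 𝕜 _ = _
      rw [hull_fourierMotzkin, dual_insert, ← hSs, inf_comm]

section Normed

variable {E : Type*} [NormedAddCommGroup E] [NormedSpace ℝ E]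

lemma FG.exists_mem_ker_norm_sub_le {K : PointedCone ℝ E} (hK : K.FG) {g : E →ₗ[ℝ] ℝ}
    (hg : ∀ u ∈ K, 0 ≤ g u) :
    ∃ κ, 0 ≤ κ ∧ ∀ u ∈ K, ∃ z ∈ K, g z = 0 ∧ ‖u - z‖ ≤ κ * g u := by
  obtain ⟨S, rfl⟩ := hK
  have hgS : ∀ s ∈ S, 0 ≤ g s := fun s hs => hg s (subset_hull hs)
  -- Generators killed by `g` go into `z`; the others satisfy `‖s‖ ≤ κ * g s` (in the sum,
  -- the generators with `g s = 0` contribute `‖s‖ / 0 = 0`).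
  refine ⟨∑ s ∈ S, ‖s‖ / g s, Finset.sum_nonneg fun s hs => div_nonneg (norm_nonneg s) (hgS s hs),
    fun u hu => ?_⟩
  induction hu using Submodule.span_induction with
  | mem s hs =>
    rcases (hgS s hs).eq_or_lt with hs0 | hspos
    · exact ⟨s, subset_hull hs, hs0.symm, by simp [← hs0]⟩
    · refine ⟨0, zero_mem _, map_zero g, ?_⟩
      rw [sub_zero, ← div_le_iff₀ hspos]
      exact Finset.single_le_sum (fun s hs => div_nonneg (norm_nonneg s) (hgS s hs)) hs
  | zero => exact ⟨0, zero_mem _, map_zero g, by simp⟩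
  | add x y _ _ hx hy =>
    obtain ⟨z, hzK, hgz, hxz⟩ := hx
    obtain ⟨w, hwK, hgw, hyw⟩ := hy
    refine ⟨z + w, add_mem hzK hwK, by simp [hgz, hgw], ?_⟩
    calc ‖x + y - (z + w)‖ = ‖(x - z) + (y - w)‖ := by rw [add_sub_add_comm]
      _ ≤ ‖x - z‖ + ‖y - w‖ := norm_add_le _ _
      _ ≤ _ := by rw [map_add, mul_add]; exact add_le_add hxz hyw
  | smul c x _ hx =>
    obtain ⟨z, hzK, hgz, hxz⟩ := hx
    refine ⟨c • z, Submodule.smul_mem _ c hzK, by simp [← Nonneg.coe_smul, hgz], ?_⟩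
    rw [← Nonneg.coe_smul, ← Nonneg.coe_smul, ← smul_sub, norm_smul, map_smul, smul_eq_mul,
      Real.norm_of_nonneg c.2, mul_left_comm]
    exact mul_le_mul_of_nonneg_left hxz c.2

lemma FG.exists_neg_mul_le_of_copositive {K : PointedCone ℝ E} (hK : K.FG) {g : E →L[ℝ] ℝ}
    {B : E →L[ℝ] E →L[ℝ] ℝ} (hg : ∀ u ∈ K, 0 ≤ g u) (hB : ∀ u ∈ K, g u = 0 → 0 ≤ B u u) :
    ∃ γ, 0 ≤ γ ∧ ∀ u ∈ K, -(γ * g u * ‖u‖) ≤ B u u := by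
  obtain ⟨κ, hκ, hdecomp⟩ := FG.exists_mem_ker_norm_sub_le hK (g := g) hg
  refine ⟨‖B‖ * κ * (2 + κ * ‖g‖), by positivity, fun u hu => ?_⟩
  obtain ⟨z, hzK, hgz, hr⟩ := hdecomp u hu
  simp only [ContinuousLinearMap.coe_coe] at hgz hr
  set r := u - z
  have hu_eq : u = z + r := by simp [r]
  have hr' : ‖r‖ ≤ κ * ‖g‖ * ‖u‖ := by
    rw [mul_assoc]
    exact hr.trans (mul_le_mul_of_nonneg_left ((le_abs_self _).trans (g.le_opNorm u)) hκ)
  have hz : ‖z‖ ≤ ‖u‖ + ‖r‖ := by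
    rw [show z = u - r by simp [r]]; exact norm_sub_le u r
  have hBzr : -(‖B‖ * ‖z‖ * ‖r‖) ≤ B z r := neg_le_of_abs_le (B.le_opNorm₂ z r)
  have hBru : -(‖B‖ * ‖r‖ * ‖u‖) ≤ B r u := neg_le_of_abs_le (B.le_opNorm₂ r u)
  have hexpand : B u u = B z z + B z r + B r u := by
    have h1 : B u = B z + B r := by rw [← map_add, ← hu_eq]
    have h2 : B z u = B z z + B z r := by rw [← map_add, ← hu_eq]
    rw [h1, add_apply, h2]
  have hprod : ‖r‖ * (2 * ‖u‖ + ‖r‖) ≤ κ * g u * ((2 + κ * ‖g‖) * ‖u‖) :=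
    mul_le_mul hr (by linarith) (by positivity) (by have := hg u hu; positivity)
  calc -(‖B‖ * κ * (2 + κ * ‖g‖) * g u * ‖u‖)
      = -(‖B‖ * (κ * g u * ((2 + κ * ‖g‖) * ‖u‖))) := by ring
    _ ≤ -(‖B‖ * (‖r‖ * (2 * ‖u‖ + ‖r‖))) := by gcongr
    _ ≤ -(‖B‖ * ‖z‖ * ‖r‖) - ‖B‖ * ‖r‖ * ‖u‖ := by
        nlinarith [mul_le_mul_of_nonneg_left hz (mul_nonneg (norm_nonneg B) (norm_nonneg r))]
    _ ≤ B u u := by rw [hexpand]; linarith [hB z hzK hgz]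

theorem FG.eventually_nonneg_of_copositive {K : PointedCone ℝ E} (hK : K.FG) {g : E →L[ℝ] ℝ}
    {B : E →L[ℝ] E →L[ℝ] ℝ} (hg : ∀ u ∈ K, 0 ≤ g u) (hB : ∀ u ∈ K, g u = 0 → 0 ≤ B u u) :
    ∀ᶠ u in 𝓝 (0 : E), u ∈ K → 0 ≤ g u + B u u / 2 := by
  obtain ⟨γ, hγ, hbound⟩ := FG.exists_neg_mul_le_of_copositive hK hg hB
  filter_upwards [Metric.ball_mem_nhds (0 : E) (inv_pos.2 (by positivity : 0 < γ + 1))]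
    with u hu huK
  have hsmall : γ * ‖u‖ ≤ 1 := by
    rw [mem_ball_zero_iff, ← one_div, lt_div_iff₀ (by positivity)] at hu
    nlinarith [norm_nonneg u]
  have := mul_le_mul_of_nonneg_left hsmall (hg u huK)
  linarith [hbound u huK, hg u huK]

end Normed

end PointedCone

section Polyhedron

variable {ι E : Type*} [AddCommGroup E] [Module ℝ E]

def polyhedron (a : ι → Module.Dual ℝ E) (b : ι → ℝ) : Set E := {x | ∀ i, b i ≤ a i x}

def activeCone (a : ι → Module.Dual ℝ E) (b : ι → ℝ) (x : E) : PointedCone ℝ E :=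
  PointedCone.dual .id (a '' {i | a i x = b i})

variable {a : ι → Module.Dual ℝ E} {b : ι → ℝ} {x : E}

lemma mem_activeCone {d : E} : d ∈ activeCone a b x ↔ ∀ i, a i x = b i → 0 ≤ a i d := by
  simp [activeCone]

lemma sub_mem_activeCone {y : E} (hy : y ∈ polyhedron a b) : y - x ∈ activeCone a b x :=
  mem_activeCone.2 fun i hi => by rw [map_sub, hi, sub_nonneg]; exact hy i

lemma eventually_add_smul_mem_polyhedron [Finite ι] (hx : x ∈ polyhedron a b) {d : E}
    (hd : d ∈ activeCone a b x) : ∀ᶠ t in 𝓝[≥] (0 : ℝ), x + t • d ∈ polyhedron a b := by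
  refine eventually_all.2 fun i => ?_
  simp only [map_add, map_smul, smul_eq_mul]
  rcases (hx i).eq_or_lt with hi | hi
  · filter_upwards [self_mem_nhdsWithin] with t ht
    rw [← hi]
    exact le_add_of_nonneg_right (mul_nonneg ht (mem_activeCone.1 hd i hi.symm))
  · have hlim : Tendsto (fun t : ℝ => a i x + t * a i d) (𝓝 0) (𝓝 (a i x)) :=
      Continuous.tendsto' (by fun_prop) 0 _ (by simp)
    exact nhdsWithin_le_nhds ((hlim.eventually (lt_mem_nhds hi)).mono fun _ => le_of_lt)

lemma exists_pos_add_smul_mem_polyhedron [Finite ι] (hx : x ∈ polyhedron a b) {d : E}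
    (hd : d ∈ activeCone a b x) : ∃ t : ℝ, 0 < t ∧ x + t • d ∈ polyhedron a b := by
  have := (eventually_add_smul_mem_polyhedron hx hd).filter_mono
    (nhdsWithin_mono _ Ioi_subset_Ici_self)
  obtain ⟨t, ht, htpos⟩ := (this.and self_mem_nhdsWithin).exists
  exact ⟨t, htpos, ht⟩

end Polyhedron

lemma nonneg_of_eventually_nonneg_quadratic {p q : ℝ}
    (h : ∀ᶠ t in 𝓝[>] (0 : ℝ), 0 ≤ t * p + t ^ 2 * q) : 0 ≤ p ∧ (p = 0 → 0 ≤ q) := by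
  have hdiv : ∀ᶠ t in 𝓝[>] (0 : ℝ), 0 ≤ p + t * q := by
    filter_upwards [h, self_mem_nhdsWithin] with t ht htpos
    have : t * (p + t * q) = t * p + t ^ 2 * q := by ring
    exact nonneg_of_mul_nonneg_right (this ▸ ht) htpos
  have hlim : Tendsto (fun t : ℝ => p + t * q) (𝓝[>] 0) (𝓝 p) :=
    (Continuous.tendsto' (by fun_prop) 0 _ (by simp)).mono_left nhdsWithin_le_nhds
  refine ⟨ge_of_tendsto hlim hdiv, fun hp => ?_⟩
  obtain ⟨t, ht, htpos⟩ := (hdiv.and self_mem_nhdsWithin).exists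
  rw [hp, zero_add] at ht
  exact nonneg_of_mul_nonneg_right ht htpos

section LocalMin

variable {ι E : Type*} [Finite ι] [NormedAddCommGroup E] [NormedSpace ℝ E]
  {a : ι → Module.Dual ℝ E} {b : ι → ℝ} {x : E} {f : E → ℝ} {g : Module.Dual ℝ E}
  {B : LinearMap.BilinForm ℝ E}

lemma IsLocalMinOn.nonneg_of_mem_activeCone (hx : x ∈ polyhedron a b)
    (hf : ∀ d, f (x + d) = f x + g d + B d d / 2) (hmin : IsLocalMinOn f (polyhedron a b) x)
    {d : E} (hd : d ∈ activeCone a b x) : 0 ≤ g d ∧ (g d = 0 → 0 ≤ B d d) := by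
  have hray : Tendsto (fun t : ℝ => x + t • d) (𝓝[>] 0) (𝓝[polyhedron a b] x) := by
    refine tendsto_nhdsWithin_iff.2 ⟨?_, ?_⟩
    · exact (Continuous.tendsto' (by fun_prop) 0 _ (by simp)).mono_left nhdsWithin_le_nhds
    · exact (eventually_add_smul_mem_polyhedron hx hd).filter_mono
        (nhdsWithin_mono _ Ioi_subset_Ici_self)
  have hquad := nonneg_of_eventually_nonneg_quadratic (p := g d) (q := B d d / 2) <|
    (hray.eventually hmin).mono fun t ht => by
      simp only [hf, map_smul, LinearMap.smul_apply, smul_eq_mul] at ht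
      linarith
  exact ⟨hquad.1, fun h => by linarith [hquad.2 h]⟩

theorem isLocalMinOn_polyhedron_iff [FiniteDimensional ℝ E] (hx : x ∈ polyhedron a b)
    (hf : ∀ d, f (x + d) = f x + g d + B d d / 2) :
    IsLocalMinOn f (polyhedron a b) x ↔
      (∀ y ∈ polyhedron a b, 0 ≤ g (y - x)) ∧ ∀ d ∈ activeCone a b x, g d = 0 → 0 ≤ B d d := by
  refine ⟨fun hmin => ⟨fun y hy => ?_, fun d hd => ?_⟩, fun ⟨hstat, hcop⟩ => ?_⟩
  · exact (hmin.nonneg_of_mem_activeCone hx hf (sub_mem_activeCone hy)).1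
  · exact (hmin.nonneg_of_mem_activeCone hx hf hd).2
  have hg : ∀ d ∈ activeCone a b x, 0 ≤ g d := by
    intro d hd
    obtain ⟨t, ht, hmem⟩ := exists_pos_add_smul_mem_polyhedron hx hd
    have := hstat _ hmem
    rw [add_sub_cancel_left, map_smul, smul_eq_mul] at this
    exact nonneg_of_mul_nonneg_right this ht
  have hK : (activeCone a b x).FG :=
    PointedCone.fg_dual_of_finite ((finite_range a).subset (image_subset_range _ _))
  have hev := PointedCone.FG.eventually_nonneg_of_copositive hK
    (g := LinearMap.toContinuousLinearMap g)
    (B := LinearMap.toContinuousLinearMap (LinearMap.toContinuousLinearMap.toLinearMap ∘ₗ B))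
    hg hcop
  have hsub : Tendsto (fun y => y - x) (𝓝 x) (𝓝 0) := tendsto_sub_nhds_zero_iff.2 tendsto_id
  filter_upwards [nhdsWithin_le_nhds (hsub.eventually hev), self_mem_nhdsWithin] with y hy hyP
  have hfy : 0 ≤ g (y - x) + B (y - x) (y - x) / 2 := hy (sub_mem_activeCone hyP)
  rw [← add_sub_cancel x y, hf]
  linarith

end LocalMin

section Coordinates

variable {n : ℕ}

lemma norm_le_n2 (v : Fin n → ℝ) : ‖v‖ ≤ n2 v :=
  (pi_norm_le_iff_of_nonneg (Real.sqrt_nonneg _)).2 fun i =>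
    Real.abs_le_sqrt (Finset.single_le_sum (f := fun j => v j ^ 2) (fun _ _ => sq_nonneg _)
      (Finset.mem_univ i))

lemma continuous_n2 : Continuous (n2 : (Fin n → ℝ) → ℝ) := by
  unfold n2; fun_prop

lemma isLocMin'_iff {f : (Fin n → ℝ) → ℝ} {X : Set (Fin n → ℝ)} {x : Fin n → ℝ} :
    IsLocMin' f X x ↔ x ∈ X ∧ IsLocalMinOn f X x := by
  refine and_congr_right fun _ => ⟨fun ⟨ε, hε, h⟩ => ?_, fun h => ?_⟩
  · have hball : {y | n2 (y - x) < ε} ∈ 𝓝 x :=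
      (continuous_n2.comp (continuous_sub_right x)).continuousAt.preimage_mem_nhds
        (Iio_mem_nhds (by simpa [n2] using hε))
    filter_upwards [nhdsWithin_le_nhds hball, self_mem_nhdsWithin] with y hy hyX
    exact h y hyX hy
  · obtain ⟨ε, hε, hball⟩ := Metric.mem_nhdsWithin_iff.1 h
    exact ⟨ε, hε, fun y hy hyε =>
      hball ⟨(dist_eq_norm y x).trans_lt ((norm_le_n2 _).trans_lt hyε), hy⟩⟩

lemma quadF_add {Q : Matrix (Fin n) (Fin n) ℝ} (hQ : ∀ i j, Q i j = Q j i) (c : Fin n → ℝ)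
    (α : ℝ) (x d : Fin n → ℝ) :
    quadF Q c α (x + d) =
      quadF Q c α x + ∑ i, gradQ Q c x i * d i + (∑ i, ∑ j, Q i j * d i * d j) / 2 := by
  have hswap : ∑ i, ∑ j, Q i j * x i * d j = ∑ i, ∑ j, Q i j * x j * d i := by
    rw [Finset.sum_comm]
    simp_rw [hQ]
  simp only [quadF, gradQ, Pi.add_apply, add_mul, mul_add, Finset.sum_add_distrib,
    Finset.sum_mul, hswap, mul_right_comm _ (d _) (x _)]
  ring

variable {ι : Type*} [Finite ι] {a : ι → Module.Dual ℝ (Fin n → ℝ)} {b : ι → ℝ}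
  {x : Fin n → ℝ}

lemma tangentCone_polyhedron (hx : x ∈ polyhedron a b) :
    TangentCone (polyhedron a b) x = activeCone a b x := by
  ext v
  refine ⟨fun ⟨xs, τ, hxs, _, hτ, _, hv⟩ => mem_activeCone.2 fun i hi => ?_, fun hv => ?_⟩
  · refine ge_of_tendsto (((a i).continuous_of_finiteDimensional.tendsto v).comp hv)
      (Eventually.of_forall fun k => ?_)
    simp only [Function.comp_apply, map_smul, map_sub, hi, smul_eq_mul]
    exact mul_nonneg (inv_nonneg.2 (hτ k).le) (sub_nonneg.2 (hxs k i))
  · have hinv : Tendsto (fun k : ℕ => 1 / ((k : ℝ) + 1)) atTop (𝓝[≥] 0) :=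
      tendsto_nhdsWithin_iff.2 ⟨tendsto_one_div_add_atTop_nhds_zero_nat,
        Eventually.of_forall fun k => mem_Ici.2 (by positivity)⟩
    obtain ⟨N, hN⟩ :=
      eventually_atTop.1 (hinv.eventually (eventually_add_smul_mem_polyhedron hx hv))
    set τ : ℕ → ℝ := fun k => 1 / (((k + N : ℕ) : ℝ) + 1)
    have hτ0 : Tendsto τ atTop (𝓝 0) :=
      tendsto_one_div_add_atTop_nhds_zero_nat.comp (tendsto_add_atTop_nat N)
    have hτpos : ∀ k, 0 < τ k := fun k => by positivity
    refine ⟨fun k => x + τ k • v, τ, fun k => hN _ (Nat.le_add_left N k), ?_, hτpos, hτ0, ?_⟩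
    · simpa using tendsto_const_nhds.add (hτ0.smul_const v)
    · simp_rw [add_sub_cancel_left, smul_smul, inv_mul_cancel₀ (hτpos _).ne', one_smul]
      exact tendsto_const_nhds

end Coordinates

/-- For a quadratic program `min_{x ∈ P} q(x)` over a polyhedron
`P = {x : Ax ≥ b}`, a feasible point `xbar` is a local minimizer iff it is a stationary point
and `Q` is copositive on the critical cone `C(xbar;q;P) = T(xbar;P) ∩ ∇q(xbar)^⊥`. -/
theorem stmt2 {n m : ℕ} (Q : Matrix (Fin n) (Fin n) ℝ) (hQ : ∀ i j, Q i j = Q j i)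
    (c : Fin n → ℝ) (α : ℝ) (A : Matrix (Fin m) (Fin n) ℝ) (b : Fin m → ℝ)
    (P : Set (Fin n → ℝ)) (hP : P = {x | ∀ i, b i ≤ ∑ j, A i j * x j})
    (xbar : Fin n → ℝ) (hxbar : xbar ∈ P) :
    IsLocMin' (quadF Q c α) P xbar ↔
      ((∀ y ∈ P, 0 ≤ ∑ i, gradQ Q c xbar i * (y i - xbar i)) ∧
       (∀ v ∈ TangentCone P xbar, (∑ i, gradQ Q c xbar i * v i) = 0 →
          0 ≤ ∑ i, ∑ j, Q i j * v i * v j)) := by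
  let a : Fin m → Module.Dual ℝ (Fin n → ℝ) := fun i => LinearMap.proj i ∘ₗ A.mulVecLin
  let g : Module.Dual ℝ (Fin n → ℝ) := dotProductEquiv ℝ (Fin n) (gradQ Q c xbar)
  let B : LinearMap.BilinForm ℝ (Fin n → ℝ) := Matrix.toLinearMap₂' ℝ Q
  have hB : ∀ v, B v v = ∑ i, ∑ j, Q i j * v i * v j := fun v => by
    simp only [B, Matrix.toLinearMap₂'_apply, smul_eq_mul]
    exact Finset.sum_congr rfl fun i _ => Finset.sum_congr rfl fun j _ => by ring
  have hf : ∀ d, quadF Q c α (xbar + d) = quadF Q c α xbar + g d + B d d / 2 := fun d => by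
    rw [quadF_add hQ, hB]; rfl
  -- `a i x` unfolds to `∑ j, A i j * x j`
  obtain rfl : P = polyhedron a b := hP
  rw [isLocMin'_iff, and_iff_right hxbar, isLocalMinOn_polyhedron_iff hxbar hf,
    tangentCone_polyhedron hxbar]
  simp only [← hB]
  rfl
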